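/- arXiv:1711.00794 — 3 statements merged into one kernel-verified Lean document; each statement's English description precedes it below -/
import Mathlib

section
/- Let Λ be a finite-dimensional F-algebra and φ an algebra automorphism of Λ. The twisted trivial extension Triv_φ(Λ) = Λ ⋉ (_φ Λ*) is a Frobenius algebra: the bilinear form ((a,f),(b,g)) = f(b) + g(φ(a)) is nondegenerate and associative, and satisfies (x,y) = (y,α(x)) for the automorphism α((a,f)) = (φ(a), f∘φ⁻¹). In particular α is a Nakayama automorphism of Triv_φ(Λ). -/
/-! Associativity and the Nakayama identity `(x,y) = (y,α x)` are direct computations. Testing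
`(a,f)` against `(b,0)` and `(0,g)` recovers `f` and `φ a`, so the form is left nondegenerate as
soon as the dual of `Λ` separates points (e.g. `Λ` projective over `F`); right nondegeneracy then
follows from the Nakayama identity because `α` is surjective. -/

open Module

namespace TrivialExtension

variable {F Λ : Type*} [CommSemiring F] [Semiring Λ] [Algebra F Λ] (φ : Λ ≃ₐ[F] Λ)

def mul (p q : Λ × Dual F Λ) : Λ × Dual F Λ :=
  (p.1 * q.1, p.2.comp (LinearMap.mulLeft F q.1) + q.2.comp (LinearMap.mulRight F (φ p.1)))

def form (p q : Λ × Dual F Λ) : F :=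
  p.2 q.1 + q.2 (φ p.1)

def nakayama (p : Λ × Dual F Λ) : Λ × Dual F Λ :=
  (φ p.1, p.2.comp φ.symm.toLinearMap)

variable {φ}

theorem form_add_left (x x' y : Λ × Dual F Λ) :
    form φ (x + x') y = form φ x y + form φ x' y := by
  simp only [form, Prod.fst_add, Prod.snd_add, map_add, LinearMap.add_apply]
  ring

theorem form_add_right (x y y' : Λ × Dual F Λ) :
    form φ x (y + y') = form φ x y + form φ x y' := by
  simp only [form, Prod.fst_add, Prod.snd_add, map_add, LinearMap.add_apply]
  ring

theorem form_smul_left (c : F) (x y : Λ × Dual F Λ) :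
    form φ (c • x) y = c * form φ x y := by
  simp only [form, Prod.smul_fst, Prod.smul_snd, map_smul, LinearMap.smul_apply, smul_eq_mul]
  ring

theorem form_smul_right (c : F) (x y : Λ × Dual F Λ) :
    form φ x (c • y) = c * form φ x y := by
  simp only [form, Prod.smul_fst, Prod.smul_snd, map_smul, LinearMap.smul_apply, smul_eq_mul]
  ring

theorem form_mul_left (x y z : Λ × Dual F Λ) :
    form φ (mul φ x y) z = form φ x (mul φ y z) := by
  simp only [form, mul, LinearMap.add_apply, LinearMap.comp_apply, LinearMap.mulLeft_apply,
    LinearMap.mulRight_apply, map_mul]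
  ring

theorem form_eq_form_nakayama (x y : Λ × Dual F Λ) :
    form φ x y = form φ y (nakayama φ x) := by
  simp only [form, nakayama, LinearMap.comp_apply, AlgEquiv.toLinearMap_apply,
    AlgEquiv.symm_apply_apply]
  ring

theorem nakayama_add (x y : Λ × Dual F Λ) :
    nakayama φ (x + y) = nakayama φ x + nakayama φ y := by
  ext <;> simp [nakayama]

theorem nakayama_smul (c : F) (x : Λ × Dual F Λ) :
    nakayama φ (c • x) = c • nakayama φ x := by
  ext <;> simp [nakayama]

theorem nakayama_mul (x y : Λ × Dual F Λ) :
    nakayama φ (mul φ x y) = mul φ (nakayama φ x) (nakayama φ y) := by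
  ext <;> simp [nakayama, mul, map_mul]

theorem nakayama_symm_nakayama (x : Λ × Dual F Λ) : nakayama φ.symm (nakayama φ x) = x := by
  ext <;> simp [nakayama]

theorem nakayama_bijective : Function.Bijective (nakayama φ) :=
  Function.bijective_iff_has_inverse.mpr ⟨nakayama φ.symm, nakayama_symm_nakayama,
    fun x => by simpa using nakayama_symm_nakayama (φ := φ.symm) x⟩

variable [Projective F Λ]

theorem eq_zero_of_form_left_eq_zero {x : Λ × Dual F Λ} (hx : ∀ y, form φ x y = 0) : x = 0 := by
  have hdual : x.2 = 0 := LinearMap.ext fun b => by simpa [form] using hx (b, 0)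
  have hφ : φ x.1 = 0 := (forall_dual_apply_eq_zero_iff F _).mp fun g => by
    simpa [form, hdual] using hx (0, g)
  exact Prod.ext (by simpa using hφ) hdual

theorem eq_zero_of_form_right_eq_zero {x : Λ × Dual F Λ} (hx : ∀ y, form φ y x = 0) : x = 0 :=
  eq_zero_of_form_left_eq_zero fun y => by
    obtain ⟨z, rfl⟩ := (nakayama_bijective (φ := φ)).surjective y
    rw [← form_eq_form_nakayama, hx]

end TrivialExtension

open TrivialExtension in
theorem stmt_1_general (F : Type) [Field F] (Λ : Type) [Ring Λ] [Algebra F Λ]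
    (φ : Λ ≃ₐ[F] Λ) :
    ∀ mul : (Λ × (Λ →ₗ[F] F)) → (Λ × (Λ →ₗ[F] F)) → (Λ × (Λ →ₗ[F] F)),
      (mul = fun p q => (p.1 * q.1,
          p.2.comp (LinearMap.mulLeft F q.1) + q.2.comp (LinearMap.mulRight F (φ p.1)))) →
    ∀ B : (Λ × (Λ →ₗ[F] F)) → (Λ × (Λ →ₗ[F] F)) → F,
      (B = fun p q => p.2 q.1 + q.2 (φ p.1)) →
    ∀ α : (Λ × (Λ →ₗ[F] F)) → (Λ × (Λ →ₗ[F] F)),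
      (α = fun p => (φ p.1, p.2.comp φ.symm.toLinearMap)) →
      -- B is bilinear
      (∀ x x' y, B (x + x') y = B x y + B x' y) ∧
      (∀ x y y', B x (y + y') = B x y + B x y') ∧
      (∀ (c : F) (x y), B (c • x) y = c * B x y) ∧
      (∀ (c : F) (x y), B x (c • y) = c * B x y) ∧
      -- B is nondegenerate
      (∀ x, (∀ y, B x y = 0) → x = 0) ∧
      (∀ x, (∀ y, B y x = 0) → x = 0) ∧
      -- B is associative
      (∀ x y z, B (mul x y) z = B x (mul y z)) ∧
      -- α is a Nakayama automorphism: (x,y) = (y, α(x))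
      (∀ x y, B x y = B y (α x)) ∧
      -- α is an algebra automorphism
      Function.Bijective α ∧
      (∀ x y, α (x + y) = α x + α y) ∧
      (∀ (c : F) (x), α (c • x) = c • α x) ∧
      (∀ x y, α (mul x y) = mul (α x) (α y)) := by
  rintro _ rfl _ rfl _ rfl
  exact ⟨form_add_left, form_add_right, form_smul_left, form_smul_right,
    fun _ => eq_zero_of_form_left_eq_zero, fun _ => eq_zero_of_form_right_eq_zero,
    form_mul_left, form_eq_form_nakayama, nakayama_bijective, nakayama_add, nakayama_smul,
    nakayama_mul⟩

/-- The twisted trivial extension `Triv_φ(Λ) = Λ ⋉ (_φΛ*)` of a finite-dimensional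
`F`-algebra `Λ` by an automorphism `φ`, with multiplication
`(a,f)(b,g) = (ab, f·b + φ(a)·g)` (where `(f·b)(x) = f(bx)` and `(φ(a)·g)(x) = g(x·φ(a))`),
is a Frobenius algebra: the bilinear form `((a,f),(b,g)) = f(b) + g(φ(a))` is
nondegenerate, associative, and satisfies `(x,y) = (y, α(x))` for the (Nakayama)
automorphism `α((a,f)) = (φ(a), f ∘ φ⁻¹)`. -/
theorem stmt_1 (F : Type) [Field F] (Λ : Type) [Ring Λ] [Algebra F Λ]
    [FiniteDimensional F Λ] (φ : Λ ≃ₐ[F] Λ) :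
    ∀ mul : (Λ × (Λ →ₗ[F] F)) → (Λ × (Λ →ₗ[F] F)) → (Λ × (Λ →ₗ[F] F)),
      (mul = fun p q => (p.1 * q.1,
          p.2.comp (LinearMap.mulLeft F q.1) + q.2.comp (LinearMap.mulRight F (φ p.1)))) →
    ∀ B : (Λ × (Λ →ₗ[F] F)) → (Λ × (Λ →ₗ[F] F)) → F,
      (B = fun p q => p.2 q.1 + q.2 (φ p.1)) →
    ∀ α : (Λ × (Λ →ₗ[F] F)) → (Λ × (Λ →ₗ[F] F)),
      (α = fun p => (φ p.1, p.2.comp φ.symm.toLinearMap)) →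
      -- B is bilinear
      (∀ x x' y, B (x + x') y = B x y + B x' y) ∧
      (∀ x y y', B x (y + y') = B x y + B x y') ∧
      (∀ (c : F) (x y), B (c • x) y = c * B x y) ∧
      (∀ (c : F) (x y), B x (c • y) = c * B x y) ∧
      -- B is nondegenerate
      (∀ x, (∀ y, B x y = 0) → x = 0) ∧
      (∀ x, (∀ y, B y x = 0) → x = 0) ∧
      -- B is associative
      (∀ x y z, B (mul x y) z = B x (mul y z)) ∧
      -- α is a Nakayama automorphism: (x,y) = (y, α(x))
      (∀ x y, B x y = B y (α x)) ∧
      -- α is an algebra automorphism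
      Function.Bijective α ∧
      (∀ x y, α (x + y) = α x + α y) ∧
      (∀ (c : F) (x), α (c • x) = c • α x) ∧
      (∀ x y, α (mul x y) = mul (α x) (α y)) :=
  stmt_1_general F Λ φ
end

section
/- Let Λ be a finite-dimensional F-algebra and e = e² an idempotent of Λ. Then there is an algebra isomorphism Triv(eΛe) ≅ e·Triv(Λ)·e, where Triv(Λ) = Λ ⋉ Λ* is the trivial extension algebra. -/
/-- For an idempotent `e` of a finite-dimensional `F`-algebra `Λ`, there is an algebra
isomorphism `Triv(eΛe) ≅ e·Triv(Λ)·e`, where `Triv(Λ) = Λ ⋉ Λ*` is the trivial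
extension (with `(a,f)(b,g) = (ab, fb + ag)`), `e` is identified with `(e,0)`, and
`(eΛe)*` is identified with the functionals on `Λ` factoring through `x ↦ exe`. -/
theorem stmt_3 (F : Type) [Field F] (Λ : Type) [Ring Λ] [Algebra F Λ]
    [FiniteDimensional F Λ] (e : Λ) (he : e * e = e) :
    ∀ mulT : (Λ × (Λ →ₗ[F] F)) → (Λ × (Λ →ₗ[F] F)) → (Λ × (Λ →ₗ[F] F)),
      (mulT = fun p q => (p.1 * q.1,
          p.2.comp (LinearMap.mulLeft F q.1) + q.2.comp (LinearMap.mulRight F p.1))) →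
      ∃ Φ : {p : Λ × (Λ →ₗ[F] F) // e * p.1 * e = p.1 ∧ ∀ x, p.2 x = p.2 (e * x * e)} →
            {p : Λ × (Λ →ₗ[F] F) // mulT ((e, 0) : Λ × (Λ →ₗ[F] F)) (mulT p ((e, 0))) = p},
        Function.Bijective Φ ∧
        (∀ x y z, z.val = x.val + y.val → (Φ z).val = (Φ x).val + (Φ y).val) ∧
        (∀ (c : F) (x y), y.val = c • x.val → (Φ y).val = c • (Φ x).val) ∧
        (∀ x y z, z.val = mulT x.val y.val → (Φ z).val = mulT (Φ x).val (Φ y).val) ∧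
        (∀ x, x.val = ((e, 0) : Λ × (Λ →ₗ[F] F)) → (Φ x).val = ((e, 0) : Λ × (Λ →ₗ[F] F))) := by
  intro mulT hm
  subst hm
  have key : ∀ p : Λ × (Λ →ₗ[F] F),
      (e * p.1 * e = p.1 ∧ ∀ x, p.2 x = p.2 (e * x * e)) ↔
      ((fun p q : Λ × (Λ →ₗ[F] F) => (p.1 * q.1,
          p.2.comp (LinearMap.mulLeft F q.1) + q.2.comp (LinearMap.mulRight F p.1)))
        ((e, 0) : Λ × (Λ →ₗ[F] F))
        ((fun p q : Λ × (Λ →ₗ[F] F) => (p.1 * q.1,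
          p.2.comp (LinearMap.mulLeft F q.1) + q.2.comp (LinearMap.mulRight F p.1)))
          p ((e, 0) : Λ × (Λ →ₗ[F] F))) = p) := by
    intro p
    simp only [Prod.ext_iff, LinearMap.ext_iff]
    constructor
    · rintro ⟨h1, h2⟩
      refine ⟨by rw [← mul_assoc]; exact h1, fun x => ?_⟩
      simp [mul_assoc, (h2 x).symm, ← mul_assoc]
    · rintro ⟨h1, h2⟩
      refine ⟨by rw [mul_assoc]; exact h1, fun x => ?_⟩
      have := h2 x
      simp [mul_assoc] at this
      rw [mul_assoc]; exact this.symm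
  refine ⟨fun p => ⟨p.val, (key p.val).1 p.property⟩, ⟨?_, ?_⟩, ?_, ?_, ?_, ?_⟩
  · intro a b h
    exact Subtype.ext (by simpa [Subtype.ext_iff] using h)
  · intro q
    exact ⟨⟨q.val, (key q.val).2 q.property⟩, rfl⟩
  · intro x y z h; exact h
  · intro c x y h; exact h
  · intro x y z h; exact h
  · intro x h; exact h
end

section
/- The type A higher zigzag algebra Z^d_s = Triv_{d+1}((Λ^d_s)^!) is isomorphic to the untwisted trivial extension Triv((Λ^d_s)^!), and hence Z^d_s is a symmetric algebra. -/
/-- Paths of a quiver, bundled with their endpoints. -/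
abbrev PathIdx (V : Type) [Quiver.{0} V] := Σ a b : V, Quiver.Path a b

/-- The path algebra `FQ`: the vector space with basis the paths of the quiver. -/
abbrev PathAlg (F : Type) [Field F] (V : Type) [Quiver.{0} V] := PathIdx V →₀ F

/-- Composition of composable bundled paths. -/
def pcomp {V : Type} [Quiver.{0} V] (p q : PathIdx V) (h : p.2.1 = q.1) : PathIdx V :=
  ⟨p.1, q.2.1, p.2.2.comp (q.2.2.cast h.symm rfl)⟩

/-- Multiplication of the path algebra: composition of composable paths, `0` otherwise. -/
noncomputable def pmul {F : Type} [Field F] {V : Type} [Quiver.{0} V] [DecidableEq V]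
    (x y : PathAlg F V) : PathAlg F V :=
  x.sum fun p cp => y.sum fun q cq =>
    if h : p.2.1 = q.1 then Finsupp.single (pcomp p q h) (cp * cq) else 0

/-- The unit of the path algebra: the sum of the trivial paths at the vertices. -/
noncomputable def pone (F : Type) [Field F] (V : Type) [Quiver.{0} V] [Fintype V] :
    PathAlg F V :=
  ∑ a : V, Finsupp.single (⟨a, a, Quiver.Path.nil⟩ : PathIdx V) 1

/-- `π : FQ → Λ` presents the algebra `Λ` as the quotient of the path algebra of the
quiver by the two-sided ideal generated by the relation set `Rel`. -/
def IsPresentation {F : Type} [Field F] {V : Type} [Quiver.{0} V] [DecidableEq V] [Fintype V]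
    {Λ : Type} [Ring Λ] [Algebra F Λ] (π : PathAlg F V → Λ) (Rel : Set (PathAlg F V)) :
    Prop :=
  (∀ x y, π (x + y) = π x + π y) ∧
  (∀ (c : F) (x), π (c • x) = c • π x) ∧
  (∀ x y, π (pmul x y) = π x * π y) ∧
  π (pone F V) = 1 ∧
  Function.Surjective π ∧
  ∀ x, π x = 0 ↔ x ∈ Submodule.span F {y | ∃ a b, ∃ r ∈ Rel, y = pmul a (pmul r b)}
/-- Vertices of the type `A` simplex quiver: tuples of `d+1` nonnegative integers
summing to `s - 1`. -/
def Vx (d s : ℕ) : Type := {x : Fin (d + 1) → ℕ // ∑ i, x i = s - 1}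

/-- Lower coordinate `i.castSucc` by one and raise coordinate `i.succ` by one. -/
def stepv {d s : ℕ} (x : Vx d s) (i : Fin d) : Fin (d + 1) → ℕ :=
  Function.update (Function.update x.1 i.castSucc (x.1 i.castSucc - 1)) i.succ
    (x.1 i.succ + 1)

/-- Arrows of the simplex quiver: in direction `i`, from `x` to `x - e_{i} + e_{i+1}`,
whenever the coordinate being lowered is positive. -/
def Ar (d s : ℕ) (x y : Vx d s) : Type :=
  {i : Fin d // 1 ≤ x.1 i.castSucc ∧ y.1 = stepv x i}

instance (d s : ℕ) : Quiver.{0} (Vx d s) := ⟨Ar d s⟩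

instance (d s : ℕ) : DecidableEq (Vx d s) :=
  Subtype.instDecidableEq

instance (d s : ℕ) : Finite (Vx d s) := by
  have hb : ∀ x : Vx d s, ∀ i, x.1 i < s + 1 := by
    intro x i
    have h1 : x.1 i ≤ ∑ j, x.1 j :=
      Finset.single_le_sum (fun j _ => Nat.zero_le (x.1 j)) (Finset.mem_univ i)
    have h2 := x.2
    omega
  exact Finite.of_injective
    (fun x : Vx d s => fun i => (⟨x.1 i, hb x i⟩ : Fin (s + 1)))
    (by
      intro a b h
      apply Subtype.ext
      funext i
      have := congrFun h i
      simpa [Fin.ext_iff] using this)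

noncomputable instance (d s : ℕ) : Fintype (Vx d s) := Fintype.ofFinite _

/-- The bundled length-two path through two composable arrows. -/
def pathTwo {d s : ℕ} {x y z : Vx d s} (a1 : Ar d s x y) (a2 : Ar d s y z) :
    PathIdx (Vx d s) :=
  ⟨x, z, (Quiver.Path.nil.cons (a1 : x ⟶ y)).cons (a2 : y ⟶ z)⟩

/-- The commutation relations `α_i α_j - α_j α_i` (terms falling off the quiver being
read as zero). -/
def RelComm (F : Type) [Field F] (d s : ℕ) : Set (PathAlg F (Vx d s)) :=
  {r | ∃ (x y z : Vx d s) (a1 : Ar d s x y) (a2 : Ar d s y z),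
      (∃ (y' z' : Vx d s) (b1 : Ar d s x y') (b2 : Ar d s y' z'),
        b1.1 = a2.1 ∧ b2.1 = a1.1 ∧
        r = Finsupp.single (pathTwo a1 a2) 1 - Finsupp.single (pathTwo b1 b2) 1) ∨
      ((¬ ∃ (y' z' : Vx d s) (b1 : Ar d s x y') (b2 : Ar d s y' z'),
          b1.1 = a2.1 ∧ b2.1 = a1.1) ∧
        r = Finsupp.single (pathTwo a1 a2) 1)}

/-- The relations of the quadratic dual `(Λ^d_s)^!`: zero relations `f_i f_i = 0`
and commutativity relations `f_i f_j = f_j f_i` whenever both composites exist. -/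
def RelDual (F : Type) [Field F] (d s : ℕ) : Set (PathAlg F (Vx d s)) :=
  {r | ∃ (x y z : Vx d s) (a1 : Ar d s x y) (a2 : Ar d s y z),
      (a1.1 = a2.1 ∧ r = Finsupp.single (pathTwo a1 a2) 1) ∨
      (∃ (y' z' : Vx d s) (b1 : Ar d s x y') (b2 : Ar d s y' z'),
        b1.1 = a2.1 ∧ b2.1 = a1.1 ∧
        r = Finsupp.single (pathTwo a1 a2) 1 - Finsupp.single (pathTwo b1 b2) 1)}

/-- The list of directions of the arrows along a path in the simplex quiver. -/
def dirList {d s : ℕ} : ∀ {a b : Vx d s}, Quiver.Path a b → List (Fin d)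
  | _, _, Quiver.Path.nil => []
  | _, _, Quiver.Path.cons p e => dirList p ++ [(e : Ar d s _ _).1]

/-!
The weight `w(x) = ∑_j j·x_j` of a vertex grows by exactly one along every arrow, so the path
length is `w(target) - w(source)` and `(-1)^{d·length}` factors as `ε(source) ε(target)` with
`ε(x) = (-1)^{d·w(x)}`. Hence `ζ^d` is conjugation by the unit `u = ∑ ε(x) e_x`. For an inner
twist `ζ(a) = u⁻¹ a u`, the map `(a, f) ↦ (a, f(- · u))` identifies the twisted trivial extension
with the untwisted one, which is symmetric via the form `((a, f), (b, g)) ↦ f(b) + g(a)`.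
-/

section PathAlgebra

variable {F : Type} [Field F] {V : Type} [Quiver.{0} V]

abbrev trivialPath (a : V) : PathIdx V := ⟨a, a, Quiver.Path.nil⟩

lemma pmul_single_single [DecidableEq V] (p q : PathIdx V) (c c' : F) :
    pmul (Finsupp.single p c) (Finsupp.single q c') =
      if h : p.2.1 = q.1 then Finsupp.single (pcomp p q h) (c * c') else 0 := by
  unfold pmul
  rw [Finsupp.sum_single_index, Finsupp.sum_single_index]
  · split <;> simp
  · rw [Finsupp.sum_single_index] <;> split <;> simp

lemma pcomp_trivialPath_left (p : PathIdx V) : pcomp (trivialPath p.1) p rfl = p := by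
  obtain ⟨a, b, q⟩ := p
  simp [pcomp]

lemma pcomp_trivialPath_right (p : PathIdx V) : pcomp p (trivialPath p.2.1) rfl = p := by
  obtain ⟨a, b, q⟩ := p
  simp [pcomp]

lemma pmul_trivialPath_single [DecidableEq V] (a : V) (p : PathIdx V) :
    pmul (Finsupp.single (trivialPath a) (1 : F)) (Finsupp.single p 1) =
      if a = p.1 then Finsupp.single p 1 else 0 := by
  rw [pmul_single_single]
  rcases eq_or_ne a p.1 with rfl | h
  · simp [pcomp_trivialPath_left]
  · simp [h]

lemma pmul_single_trivialPath [DecidableEq V] (p : PathIdx V) (b : V) :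
    pmul (Finsupp.single p (1 : F)) (Finsupp.single (trivialPath b) 1) =
      if p.2.1 = b then Finsupp.single p 1 else 0 := by
  rw [pmul_single_single]
  rcases eq_or_ne p.2.1 b with rfl | h
  · simp [pcomp_trivialPath_right]
  · simp [h]

end PathAlgebra

section Presentation

variable {F : Type} [Field F] {V : Type} [Quiver.{0} V] [DecidableEq V] [Fintype V]
  {Λ : Type} [Ring Λ] [Algebra F Λ] {π : PathAlg F V → Λ} {Rel : Set (PathAlg F V)}

variable (π) in
noncomputable def vertexSum (ε : V → F) : Λ :=
  ∑ a, ε a • π (Finsupp.single (trivialPath a) 1)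

namespace IsPresentation

variable (hπ : IsPresentation π Rel)
include hπ

lemma map_add (x y : PathAlg F V) : π (x + y) = π x + π y := hπ.1 x y

lemma map_smul (c : F) (x : PathAlg F V) : π (c • x) = c • π x := hπ.2.1 c x

lemma map_pmul (x y : PathAlg F V) : π (pmul x y) = π x * π y := hπ.2.2.1 x y

lemma map_pone : π (pone F V) = 1 := hπ.2.2.2.1

lemma surjective : Function.Surjective π := hπ.2.2.2.2.1

def linearMap : PathAlg F V →ₗ[F] Λ where
  toFun := π
  map_add' := hπ.map_add
  map_smul' := hπ.map_smul

lemma map_zero : π 0 = 0 := hπ.linearMap.map_zero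

lemma map_single (p : PathIdx V) (c : F) :
    π (Finsupp.single p c) = c • π (Finsupp.single p 1) := by
  rw [← hπ.map_smul, Finsupp.smul_single_one]

lemma vertexSum_mul (ε : V → F) (p : PathIdx V) :
    vertexSum π ε * π (Finsupp.single p 1) = ε p.1 • π (Finsupp.single p 1) := by
  simp only [vertexSum, Finset.sum_mul, smul_mul_assoc, ← hπ.map_pmul, pmul_trivialPath_single,
    apply_ite π, hπ.map_zero, smul_ite, smul_zero, Finset.sum_ite_eq', Finset.mem_univ, if_true]

lemma mul_vertexSum (ε : V → F) (p : PathIdx V) :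
    π (Finsupp.single p 1) * vertexSum π ε = ε p.2.1 • π (Finsupp.single p 1) := by
  simp only [vertexSum, Finset.mul_sum, mul_smul_comm, ← hπ.map_pmul, pmul_single_trivialPath,
    apply_ite π, hπ.map_zero, smul_ite, smul_zero, Finset.sum_ite_eq, Finset.mem_univ, if_true]

lemma vertexSum_mul_vertexSum (ε η : V → F) :
    vertexSum π ε * vertexSum π η = vertexSum π (ε * η) := by
  rw [vertexSum, Finset.sum_mul]
  simp only [smul_mul_assoc, hπ.mul_vertexSum, smul_smul]
  rfl

lemma vertexSum_one : vertexSum π (1 : V → F) = 1 := by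
  rw [← hπ.map_pone, pone]
  change _ = hπ.linearMap _
  simp [map_sum, vertexSum, IsPresentation.linearMap]

noncomputable def vertexSumUnit (ε : V → Fˣ) : Λˣ where
  val := vertexSum π fun a => ε a
  inv := vertexSum π fun a => ↑(ε a)⁻¹
  val_inv := by rw [hπ.vertexSum_mul_vertexSum, ← hπ.vertexSum_one]; congr; ext; simp
  inv_val := by rw [hπ.vertexSum_mul_vertexSum, ← hπ.vertexSum_one]; congr; ext; simp

lemma conj_vertexSumUnit (ε : V → Fˣ) (p : PathIdx V) :
    ↑(hπ.vertexSumUnit ε)⁻¹ * π (Finsupp.single p 1) * ↑(hπ.vertexSumUnit ε) =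
      (↑((ε p.1)⁻¹ * ε p.2.1) : F) • π (Finsupp.single p 1) := by
  change vertexSum π _ * _ * vertexSum π _ = _
  rw [hπ.vertexSum_mul, smul_mul_assoc, hπ.mul_vertexSum, smul_smul, Units.val_mul, mul_comm]

lemma eq_conj_of_forall_path (ζ : Λ → Λ) (hζadd : ∀ x y, ζ (x + y) = ζ x + ζ y)
    (hζsmul : ∀ (c : F) (x), ζ (c • x) = c • ζ x) (u : Λˣ)
    (hζpath : ∀ p, ζ (π (Finsupp.single p 1)) = ↑u⁻¹ * π (Finsupp.single p 1) * ↑u)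
    (x : Λ) :
    ζ x = ↑u⁻¹ * x * ↑u := by
  obtain ⟨y, rfl⟩ := hπ.surjective x
  induction y using Finsupp.induction_linear with
  | zero => simpa [hπ.map_zero] using hζsmul 0 0
  | add f g hf hg => rw [hπ.map_add, hζadd, hf, hg, mul_add, add_mul]
  | single p c => rw [hπ.map_single, hζsmul, hζpath, mul_smul_comm, smul_mul_assoc]

end IsPresentation

end Presentation

section Simplex

variable {d s : ℕ}

def weight (x : Fin (d + 1) → ℕ) : ℕ := ∑ j : Fin (d + 1), (j : ℕ) * x j

lemma weight_stepv (x : Vx d s) (i : Fin d) (h : 1 ≤ x.1 i.castSucc) :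
    weight (stepv x i) = weight x.1 + 1 := by
  have hstep : ∀ j, (stepv x i j : ℤ) =
      x.1 j - (Pi.single i.castSucc 1 : _ → ℤ) j + (Pi.single i.succ 1 : _ → ℤ) j := by
    intro j
    simp only [stepv, Function.update_apply, Pi.single_apply]
    split_ifs <;> simp_all [(Fin.castSucc_lt_succ (i := i)).ne]
  zify
  simp only [weight, Nat.cast_sum, Nat.cast_mul, hstep, mul_add, mul_sub, Finset.sum_add_distrib,
    Finset.sum_sub_distrib, Pi.single_apply, mul_ite, mul_one, mul_zero, Finset.sum_ite_eq',
    Finset.mem_univ, if_true, Fin.val_castSucc, Fin.val_succ, Nat.cast_add, Nat.cast_one]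
  ring

lemma Vx.weight_eq_add_length {a b : Vx d s} (p : Quiver.Path a b) :
    weight b.1 = weight a.1 + p.length := by
  induction p with
  | nil => rfl
  | cons q e ih =>
    rw [Quiver.Path.length_cons, ← add_assoc, ← ih]
    obtain ⟨i, hi, hstep⟩ : Ar d s _ _ := e
    rw [← weight_stepv _ i hi, hstep]

end Simplex

section TrivialExtension

variable (F : Type) [CommRing F] {Λ : Type} [Ring Λ] [Algebra F Λ]

def trivExtMul (ζ : Λ → Λ) (p q : Λ × (Λ →ₗ[F] F)) : Λ × (Λ →ₗ[F] F) :=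
  (p.1 * q.1, p.2.comp (LinearMap.mulLeft F q.1) + q.2.comp (LinearMap.mulRight F (ζ p.1)))

def trivExtConj (u : Λˣ) : (Λ × (Λ →ₗ[F] F)) ≃ₗ[F] (Λ × (Λ →ₗ[F] F)) :=
  (LinearEquiv.refl F Λ).prodCongr (u.mulRightLinearEquiv F).dualMap

lemma trivExtConj_apply (u : Λˣ) (x : Λ × (Λ →ₗ[F] F)) :
    trivExtConj F u x = (x.1, x.2.comp (LinearMap.mulRight F u)) := rfl

lemma trivExtConj_trivExtMul {ζ : Λ → Λ} (u : Λˣ) (hζ : ∀ a, ζ a = ↑u⁻¹ * a * ↑u)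
    (x y : Λ × (Λ →ₗ[F] F)) :
    trivExtConj F u (trivExtMul F ζ x y) =
      trivExtMul F id (trivExtConj F u x) (trivExtConj F u y) := by
  refine Prod.ext rfl (LinearMap.ext fun z => ?_)
  simp [trivExtConj_apply, trivExtMul, hζ, mul_assoc]

lemma trivExtConj_one (u : Λˣ) : trivExtConj F u (1, 0) = (1, 0) := rfl

def trivExtForm (x y : Λ × (Λ →ₗ[F] F)) : F := x.2 y.1 + y.2 x.1

def IsSymmetrizingForm {X : Type} [AddCommMonoid X] [Module F X] (mul : X → X → X)
    (B : X → X → F) : Prop :=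
  (∀ x x' y, B (x + x') y = B x y + B x' y) ∧
  (∀ x y y', B x (y + y') = B x y + B x y') ∧
  (∀ (c : F) (x y), B (c • x) y = c * B x y) ∧
  (∀ (c : F) (x y), B x (c • y) = c * B x y) ∧
  (∀ x, (∀ y, B x y = 0) → x = 0) ∧
  (∀ x, (∀ y, B y x = 0) → x = 0) ∧
  (∀ x y z, B (mul x y) z = B x (mul y z)) ∧
  (∀ x y, B x y = B y x)

lemma trivExtForm_isSymmetrizingForm [Module.Projective F Λ] :
    IsSymmetrizingForm F (trivExtMul F (id : Λ → Λ)) (trivExtForm F) := by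
  have nondeg : ∀ x : Λ × (Λ →ₗ[F] F), (∀ y, trivExtForm F x y = 0) → x = 0 := by
    intro x hx
    refine Prod.ext ((Module.forall_dual_apply_eq_zero_iff F x.1).mp fun φ => ?_)
      (LinearMap.ext fun a => ?_)
    · simpa [trivExtForm] using hx (0, φ)
    · simpa [trivExtForm] using hx (a, 0)
  refine ⟨?_, ?_, ?_, ?_, nondeg, fun x hx => nondeg x fun y => ?_, ?_, fun x y => add_comm _ _⟩
  · intro x x' y
    simp only [trivExtForm, Prod.fst_add, Prod.snd_add, map_add, LinearMap.add_apply]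
    ring
  · intro x y y'
    simp only [trivExtForm, Prod.fst_add, Prod.snd_add, map_add, LinearMap.add_apply]
    ring
  · intro c x y
    simp only [trivExtForm, Prod.smul_fst, Prod.smul_snd, map_smul, LinearMap.smul_apply,
      smul_eq_mul]
    ring
  · intro c x y
    simp only [trivExtForm, Prod.smul_fst, Prod.smul_snd, map_smul, LinearMap.smul_apply,
      smul_eq_mul]
    ring
  · rw [trivExtForm, add_comm]; exact hx y
  · intro x y z
    simp only [trivExtForm, trivExtMul, id_eq, LinearMap.add_apply, LinearMap.comp_apply,
      LinearMap.mulLeft_apply, LinearMap.mulRight_apply]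
    ring

lemma IsSymmetrizingForm.comp_linearEquiv {X Y : Type} [AddCommMonoid X] [Module F X]
    [AddCommMonoid Y] [Module F Y] {mulX : X → X → X} {mulY : Y → Y → Y} {B : Y → Y → F}
    (hB : IsSymmetrizingForm F mulY B) (Φ : X ≃ₗ[F] Y)
    (hΦ : ∀ x y, Φ (mulX x y) = mulY (Φ x) (Φ y)) :
    IsSymmetrizingForm F mulX fun x y => B (Φ x) (Φ y) := by
  obtain ⟨haddl, haddr, hsmull, hsmulr, hnl, hnr, hassoc, hsymm⟩ := hB
  refine ⟨?_, ?_, ?_, ?_, ?_, ?_, ?_, fun x y => hsymm _ _⟩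
  · intro x x' y; simp only [map_add, haddl]
  · intro x y y'; simp only [map_add, haddr]
  · intro c x y; simp only [map_smul, hsmull]
  · intro c x y; simp only [map_smul, hsmulr]
  · intro x hx
    exact Φ.map_eq_zero_iff.mp (hnl _ fun y => by simpa using hx (Φ.symm y))
  · intro x hx
    exact Φ.map_eq_zero_iff.mp (hnr _ fun y => by simpa using hx (Φ.symm y))
  · intro x y z; simp only [hΦ, hassoc]

end TrivialExtension

theorem stmt_11_general (F : Type) [Field F] (d s : ℕ)
    (Λ : Type) [Ring Λ] [Algebra F Λ]
    (π : PathAlg F (Vx d s) → Λ) (hπ : IsPresentation π (RelDual F d s))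
    (ζ : Λ → Λ)
    (hζadd : ∀ x y, ζ (x + y) = ζ x + ζ y)
    (hζsmul : ∀ (c : F) (x), ζ (c • x) = c • ζ x)
    (hζpath : ∀ p : PathIdx (Vx d s),
      ζ (π (Finsupp.single p 1)) = ((-1 : F) ^ (d * p.2.2.length)) • π (Finsupp.single p 1)) :
    ∀ mulTw mulUn : (Λ × (Λ →ₗ[F] F)) → (Λ × (Λ →ₗ[F] F)) → (Λ × (Λ →ₗ[F] F)),
      (mulTw = fun p q => (p.1 * q.1,
          p.2.comp (LinearMap.mulLeft F q.1) + q.2.comp (LinearMap.mulRight F (ζ p.1)))) →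
      (mulUn = fun p q => (p.1 * q.1,
          p.2.comp (LinearMap.mulLeft F q.1) + q.2.comp (LinearMap.mulRight F p.1))) →
      -- Z^d_s ≅ Triv(Λ^!)
      (∃ Φ : (Λ × (Λ →ₗ[F] F)) → (Λ × (Λ →ₗ[F] F)),
        Function.Bijective Φ ∧
        (∀ x y, Φ (x + y) = Φ x + Φ y) ∧
        (∀ (c : F) (x), Φ (c • x) = c • Φ x) ∧
        (∀ x y, Φ (mulTw x y) = mulUn (Φ x) (Φ y)) ∧
        Φ ((1 : Λ), (0 : Λ →ₗ[F] F)) = ((1 : Λ), (0 : Λ →ₗ[F] F))) ∧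
      -- Z^d_s is symmetric
      (∃ B : (Λ × (Λ →ₗ[F] F)) → (Λ × (Λ →ₗ[F] F)) → F,
        (∀ x x' y, B (x + x') y = B x y + B x' y) ∧
        (∀ x y y', B x (y + y') = B x y + B x y') ∧
        (∀ (c : F) (x y), B (c • x) y = c * B x y) ∧
        (∀ (c : F) (x y), B x (c • y) = c * B x y) ∧
        (∀ x, (∀ y, B x y = 0) → x = 0) ∧
        (∀ x, (∀ y, B y x = 0) → x = 0) ∧
        (∀ x y z, B (mulTw x y) z = B x (mulTw y z)) ∧
        (∀ x y, B x y = B y x)) := by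
  set u := hπ.vertexSumUnit fun a : Vx d s => ((-1 : Fˣ) ^ d) ^ weight a.1
  have hζ : ∀ x, ζ x = ↑u⁻¹ * x * ↑u := by
    refine hπ.eq_conj_of_forall_path ζ hζadd hζsmul u fun p => ?_
    rw [hζpath, hπ.conj_vertexSumUnit, Vx.weight_eq_add_length p.2.2, pow_add,
      inv_mul_cancel_left]
    push_cast
    rw [pow_mul]
  rintro _ _ rfl rfl
  exact ⟨⟨trivExtConj F u, (trivExtConj F u).bijective, map_add _, map_smul _,
      trivExtConj_trivExtMul F u hζ, trivExtConj_one F u⟩,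
    ⟨fun x y => trivExtForm F (trivExtConj F u x) (trivExtConj F u y),
      (trivExtForm_isSymmetrizingForm F).comp_linearEquiv F (trivExtConj F u)
      (trivExtConj_trivExtMul F u hζ)⟩⟩

/-- The type `A` higher zigzag algebra `Z^d_s = Triv_{d+1}((Λ^d_s)^!)` is isomorphic to
the untwisted trivial extension `Triv((Λ^d_s)^!)`, and hence `Z^d_s` is a symmetric
algebra (it carries a nondegenerate associative *symmetric* bilinear form).  Here
`Λ^!` is presented by the simplex quiver with zero and anticommutativity-free relations,
and `ζ = ζ^d` is the automorphism multiplying (the image of) a path `p` by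
`(-1)^{d·length p}`. -/
theorem stmt_11 (F : Type) [Field F] (d s : ℕ) (hd : 1 ≤ d) (hs : 1 ≤ s)
    (Λ : Type) [Ring Λ] [Algebra F Λ]
    (π : PathAlg F (Vx d s) → Λ) (hπ : IsPresentation π (RelDual F d s))
    (ζ : Λ → Λ)
    (hζadd : ∀ x y, ζ (x + y) = ζ x + ζ y)
    (hζsmul : ∀ (c : F) (x), ζ (c • x) = c • ζ x)
    (hζmul : ∀ x y, ζ (x * y) = ζ x * ζ y)
    (hζpath : ∀ p : PathIdx (Vx d s),
      ζ (π (Finsupp.single p 1)) = ((-1 : F) ^ (d * p.2.2.length)) • π (Finsupp.single p 1)) :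
    ∀ mulTw mulUn : (Λ × (Λ →ₗ[F] F)) → (Λ × (Λ →ₗ[F] F)) → (Λ × (Λ →ₗ[F] F)),
      (mulTw = fun p q => (p.1 * q.1,
          p.2.comp (LinearMap.mulLeft F q.1) + q.2.comp (LinearMap.mulRight F (ζ p.1)))) →
      (mulUn = fun p q => (p.1 * q.1,
          p.2.comp (LinearMap.mulLeft F q.1) + q.2.comp (LinearMap.mulRight F p.1))) →
      -- Z^d_s ≅ Triv(Λ^!)
      (∃ Φ : (Λ × (Λ →ₗ[F] F)) → (Λ × (Λ →ₗ[F] F)),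
        Function.Bijective Φ ∧
        (∀ x y, Φ (x + y) = Φ x + Φ y) ∧
        (∀ (c : F) (x), Φ (c • x) = c • Φ x) ∧
        (∀ x y, Φ (mulTw x y) = mulUn (Φ x) (Φ y)) ∧
        Φ ((1 : Λ), (0 : Λ →ₗ[F] F)) = ((1 : Λ), (0 : Λ →ₗ[F] F))) ∧
      -- Z^d_s is symmetric
      (∃ B : (Λ × (Λ →ₗ[F] F)) → (Λ × (Λ →ₗ[F] F)) → F,
        (∀ x x' y, B (x + x') y = B x y + B x' y) ∧
        (∀ x y y', B x (y + y') = B x y + B x y') ∧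
        (∀ (c : F) (x y), B (c • x) y = c * B x y) ∧
        (∀ (c : F) (x y), B x (c • y) = c * B x y) ∧
        (∀ x, (∀ y, B x y = 0) → x = 0) ∧
        (∀ x, (∀ y, B y x = 0) → x = 0) ∧
        (∀ x y z, B (mulTw x y) z = B x (mulTw y z)) ∧
        (∀ x y, B x y = B y x)) :=
  stmt_11_general F d s Λ π hπ ζ hζadd hζsmul hζpath
end
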